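/- arXiv:2303.01199 — 10 statements merged into one kernel-verified Lean document; each statement's English description precedes it below -/
import Mathlib

section
/- Let X be a metric space and let S ⊆ C(ℝ,X). Then S satisfies the compactness axiom if and only if the following holds: whenever (t_n, x_n) → (t, x) in ℝ × X as n → ∞ and there exists a sequence of maps φ_n ∈ S with φ_n(t_n) = x_n for all n, there exist a map ψ ∈ S with ψ(t) = x and a subsequence (t_{n_i}, φ_{n_i}) with (t_{n_i}, φ_{n_i}) → (t, ψ) in ℝ × C(ℝ,X) as i → ∞. -/
/-!
The evaluation map `e_S` is continuous, and `ℝ × S` is metrizable because `C(ℝ, X)` is (`ℝ` being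
locally compact and σ-compact). For a continuous map from a metrizable space to a Hausdorff
first-countable one, properness is equivalent to its sequential form: every sequence whose image
converges to `b` has a subsequence converging to a point of the fibre over `b`. A sequence in
`ℝ × S` is a sequence of pairs `(tₙ, φₙ)` with `φₙ ∈ S`, and convergence in `ℝ × S` is
convergence in `ℝ × C(ℝ, X)`.
-/

open Set Filter Topology

namespace AxODE

variable {X : Type*} [MetricSpace X]

/-- The shift map `σ(t, φ)(s) = φ(s + t)` on `C(ℝ, X)`. -/
def shift (t : ℝ) (φ : C(ℝ, X)) : C(ℝ, X) :=
  ⟨fun s => φ (s + t), φ.continuous.comp (continuous_add_right t)⟩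

/-- The evaluation map `e_S : ℝ × S → ℝ × X`, `e_S(t, φ) = (t, φ(t))`. -/
def evalMap (S : Set C(ℝ, X)) : ℝ × S → ℝ × X :=
  fun p => (p.1, (p.2 : C(ℝ, X)) p.1)

/-- `S` satisfies the compactness axiom if `e_S` is proper, i.e. the preimage under `e_S`
of every compact subset of `ℝ × X` is compact. -/
def CompactnessAxiom (S : Set C(ℝ, X)) : Prop :=
  ∀ K : Set (ℝ × X), IsCompact K → IsCompact (evalMap S ⁻¹' K)

end AxODE

section SequentialProperness

open TopologicalSpace

variable {α β : Type*} [TopologicalSpace α] [TopologicalSpace β] {f : α → β}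

theorem exists_tendsto_subseq_of_isCompact_preimage [FirstCountableTopology α] [T2Space β]
    (hf : Continuous f) (hproper : ∀ K, IsCompact K → IsCompact (f ⁻¹' K))
    {u : ℕ → α} {b : β} (hu : Tendsto (f ∘ u) atTop (𝓝 b)) :
    ∃ a, f a = b ∧ ∃ φ : ℕ → ℕ, StrictMono φ ∧ Tendsto (u ∘ φ) atTop (𝓝 a) := by
  have hK : IsCompact (f ⁻¹' insert b (range (f ∘ u))) := hproper _ hu.isCompact_insert_range
  obtain ⟨a, -, φ, hφ, hlim⟩ := hK.isSeqCompact fun n => Or.inr ⟨n, rfl⟩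
  exact ⟨a, tendsto_nhds_unique ((hf.tendsto a).comp hlim) (hu.comp hφ.tendsto_atTop),
    φ, hφ, hlim⟩

theorem isCompact_preimage_of_exists_tendsto_subseq [PseudoMetrizableSpace α]
    [FirstCountableTopology β]
    (hseq : ∀ (u : ℕ → α) (b : β), Tendsto (f ∘ u) atTop (𝓝 b) →
      ∃ a, f a = b ∧ ∃ φ : ℕ → ℕ, StrictMono φ ∧ Tendsto (u ∘ φ) atTop (𝓝 a))
    {K : Set β} (hK : IsCompact K) : IsCompact (f ⁻¹' K) := by
  refine IsSeqCompact.isCompact fun u hu => ?_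
  obtain ⟨b, hb, φ, hφ, hfu⟩ := hK.isSeqCompact hu
  obtain ⟨a, rfl, ψ, hψ, hlim⟩ := hseq (u ∘ φ) b hfu
  exact ⟨a, hb, φ ∘ ψ, hφ.comp hψ, hlim⟩

theorem forall_isCompact_preimage_iff_exists_tendsto_subseq [PseudoMetrizableSpace α]
    [FirstCountableTopology β] [T2Space β] (hf : Continuous f) :
    (∀ K, IsCompact K → IsCompact (f ⁻¹' K)) ↔
      ∀ (u : ℕ → α) (b : β), Tendsto (f ∘ u) atTop (𝓝 b) →
        ∃ a, f a = b ∧ ∃ φ : ℕ → ℕ, StrictMono φ ∧ Tendsto (u ∘ φ) atTop (𝓝 a) :=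
  ⟨fun hproper _ _ => exists_tendsto_subseq_of_isCompact_preimage hf hproper,
    fun hseq _ => isCompact_preimage_of_exists_tendsto_subseq hseq⟩

end SequentialProperness

namespace AxODE

variable {X : Type*} [MetricSpace X]

theorem continuous_evalMap (S : Set C(ℝ, X)) : Continuous (evalMap S) := by
  unfold evalMap
  fun_prop

theorem isEmbedding_prodMap_subtypeVal (S : Set C(ℝ, X)) :
    IsEmbedding (Prod.map id Subtype.val : ℝ × S → ℝ × C(ℝ, X)) :=
  IsEmbedding.id.prodMap IsEmbedding.subtypeVal

theorem compactnessAxiom_iff_seq (S : Set C(ℝ, X)) :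
    CompactnessAxiom S ↔
      ∀ (tn : ℕ → ℝ) (xn : ℕ → X) (t : ℝ) (x : X) (φn : ℕ → C(ℝ, X)),
        Tendsto (fun n => (tn n, xn n)) atTop (𝓝 (t, x)) →
        (∀ n, φn n ∈ S) → (∀ n, φn n (tn n) = xn n) →
        ∃ ψ ∈ S, ψ t = x ∧ ∃ ni : ℕ → ℕ, StrictMono ni ∧
          Tendsto (fun i => (tn (ni i), φn (ni i))) atTop (𝓝 (t, ψ)) := by
  rw [CompactnessAxiom, forall_isCompact_preimage_iff_exists_tendsto_subseq (continuous_evalMap S)]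
  have hS := isEmbedding_prodMap_subtypeVal S
  constructor
  · intro h tn xn t x φn hconv hmem heq
    obtain ⟨⟨t', ψ⟩, hψ, ni, hni, hlim⟩ :=
      h (fun n => (tn n, ⟨φn n, hmem n⟩)) (t, x) (by simpa [Function.comp_def, evalMap, heq])
    obtain ⟨rfl, hψt⟩ := Prod.mk.inj hψ
    exact ⟨ψ, ψ.2, hψt, ni, hni, hS.tendsto_nhds_iff.mp hlim⟩
  · intro h u ⟨t, x⟩ hu
    obtain ⟨ψ, hψS, hψt, ni, hni, hlim⟩ :=
      h (fun n => (u n).1) (fun n => (u n).2.1 (u n).1) t x (fun n => (u n).2) hu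
        (fun n => (u n).2.2) (fun _ => rfl)
    exact ⟨(t, ⟨ψ, hψS⟩), by simp [evalMap, hψt], ni, hni, hS.tendsto_nhds_iff.mpr hlim⟩

end AxODE
end

section
/- Let X be a metric space. If a subset S ⊆ C(ℝ,X) satisfies the compactness axiom, then S is a closed subset of C(ℝ,X). -/
/-!
Since `C(ℝ, X)` is metrizable, sequences suffice. If `uₙ ∈ S` converges to `φ`, the values
`uₙ(0)` together with `φ(0)` form a compact set `A`.
The set `{ψ ∈ S | ψ(0) ∈ A}` is the projection of `e_S⁻¹' ({0} × A)`, hence compact, hence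
closed in the Hausdorff space `C(ℝ, X)`; it contains every `uₙ`, so it contains `φ`.
-/

open Set Filter Topology

namespace AxODE

variable {X : Type*} [MetricSpace X]

theorem CompactnessAxiom.isCompact_setOf_apply_mem {S : Set C(ℝ, X)} (hS : CompactnessAxiom S)
    (t : ℝ) {A : Set X} (hA : IsCompact A) : IsCompact {ψ ∈ S | ψ t ∈ A} := by
  have hproj : {ψ ∈ S | ψ t ∈ A} =
      (fun p : ℝ × S => (p.2 : C(ℝ, X))) '' (evalMap S ⁻¹' ({t} ×ˢ A)) := by
    ext ψ
    constructor
    · rintro ⟨hψS, hψA⟩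
      exact ⟨(t, ⟨ψ, hψS⟩), ⟨rfl, hψA⟩, rfl⟩
    · rintro ⟨⟨s, ψ', hψ'S⟩, ⟨rfl, hψ'A⟩, rfl⟩
      exact ⟨hψ'S, hψ'A⟩
  rw [hproj]
  exact (hS _ (isCompact_singleton.prod hA)).image (by fun_prop)

theorem isClosed_of_compactnessAxiom (S : Set C(ℝ, X)) (hS : CompactnessAxiom S) :
    IsClosed S := by
  refine closure_subset_iff_isClosed.mp fun φ hφ => ?_
  obtain ⟨u, huS, hu⟩ := mem_closure_iff_seq_limit.mp hφ
  have hu0 : Tendsto (fun n => u n 0) atTop (𝓝 (φ 0)) :=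
    ((continuous_eval_const 0).tendsto φ).comp hu
  have hK := hS.isCompact_setOf_apply_mem 0 hu0.isCompact_insert_range
  have hφK : φ ∈ {ψ ∈ S | ψ 0 ∈ insert (φ 0) (range fun n => u n 0)} :=
    hK.isClosed.mem_of_tendsto hu
      (Eventually.of_forall fun n => ⟨huS n, mem_insert_of_mem _ (mem_range_self n)⟩)
  exact hφK.1

end AxODE
end

section
/- Let X be a compact metric space. A subset S ⊆ C(ℝ,X) is compact (in the compact-open topology) if and only if S satisfies the compactness axiom. -/
/-!
If `S` is compact, then `e_S` is proper because its composite with the projection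
`ℝ × X → ℝ` is the projection `ℝ × S → ℝ`, which is proper. Conversely, `e_S` maps the slice
`{0} × S` onto `{0} × X`, and it is the whole preimage of that compact set; so the slice, and
hence `S`, is compact.
-/

open Set Filter Topology

namespace AxODE

variable {X : Type*} [MetricSpace X]

theorem fst_comp_evalMap (S : Set C(ℝ, X)) : Prod.fst ∘ evalMap S = Prod.fst :=
  rfl

theorem isProperMap_evalMap (S : Set C(ℝ, X)) [CompactSpace S] : IsProperMap (evalMap S) :=
  isProperMap_of_comp_of_t2 (continuous_evalMap S) continuous_fst
    (fst_comp_evalMap S ▸ isProperMap_fst_of_compactSpace)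

theorem IsCompact.compactnessAxiom {S : Set C(ℝ, X)} (hS : IsCompact S) :
    CompactnessAxiom S :=
  have : CompactSpace S := isCompact_iff_compactSpace.mp hS
  fun _ hK => (isProperMap_evalMap S).isCompact_preimage hK

theorem evalMap_preimage_singleton_prod_univ (S : Set C(ℝ, X)) (t : ℝ) :
    evalMap S ⁻¹' ({t} ×ˢ univ) = {t} ×ˢ univ := by
  ext ⟨s, φ⟩
  simp [evalMap]

theorem CompactnessAxiom.isCompact [CompactSpace X] {S : Set C(ℝ, X)}
    (h : CompactnessAxiom S) : IsCompact S := by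
  have hslice : IsCompact (({0} : Set ℝ) ×ˢ (univ : Set S)) := by
    simpa only [evalMap_preimage_singleton_prod_univ] using
      h _ (isCompact_singleton.prod isCompact_univ)
  rw [isCompact_iff_isCompact_univ, ← snd_image_prod (singleton_nonempty (0 : ℝ)) univ]
  exact hslice.image continuous_snd

theorem isCompact_iff_compactnessAxiom [CompactSpace X] (S : Set C(ℝ, X)) :
    IsCompact S ↔ CompactnessAxiom S :=
  ⟨IsCompact.compactnessAxiom, CompactnessAxiom.isCompact⟩

end AxODE
end

section
/- Let X be a compact metric space and S ⊆ C(ℝ,X) a shift-invariant set. Say a shift-invariant subset S' ⊆ S is maximal with respect to phase space if every shift-invariant subset S'' ⊆ S with π(S'') = π(S') satisfies S'' ⊆ S'. Then the assignment S' ↦ π(S') is a bijection from the family {S' ⊆ S : S' is shift-invariant and maximal with respect to phase space} onto the family {A ⊆ X : A is weakly invariant with respect to S}. -/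
open Set Filter Topology

namespace AxODE

variable {X : Type*} [MetricSpace X]

/-- `S` is shift-invariant if `σ(t, φ) ∈ S` for all `t ∈ ℝ` and `φ ∈ S`. -/
def ShiftInvariant (S : Set C(ℝ, X)) : Prop :=
  ∀ (t : ℝ), ∀ φ ∈ S, shift t φ ∈ S

/-- Evaluation at `0`. -/
def π : C(ℝ, X) → X := fun φ => φ 0

/-- `A` is weakly invariant with respect to `S`. -/
def WeaklyInvariant (S : Set C(ℝ, X)) (A : Set X) : Prop :=
  ∀ x ∈ A, ∃ φ ∈ S, φ 0 = x ∧ Set.range ⇑φ ⊆ A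

/-- A shift-invariant subset `S' ⊆ S` is maximal with respect to phase space if every
shift-invariant subset `S'' ⊆ S` with `π(S'') = π(S')` satisfies `S'' ⊆ S'`. -/
def MaximalWrtPhaseSpace (S S' : Set C(ℝ, X)) : Prop :=
  ∀ S'' ⊆ S, ShiftInvariant S'' → π '' S'' = π '' S' → S'' ⊆ S'

/-! The inverse sends a weakly invariant `A` to the set of all trajectories in `S` with range in
`A`. The key observation is that the orbits of a shift-invariant set sweep out exactly its phase
space: `range φ ⊆ π '' S'` for every `φ ∈ S'`. -/

theorem range_subset_image_eval {S' : Set C(ℝ, X)} (hS' : ShiftInvariant S') {φ : C(ℝ, X)}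
    (hφ : φ ∈ S') : range φ ⊆ π '' S' := by
  rintro _ ⟨t, rfl⟩
  exact ⟨shift t φ, hS' t φ hφ, by simp [π, shift]⟩

theorem weaklyInvariant_image_eval {S S' : Set C(ℝ, X)} (hsub : S' ⊆ S)
    (hS' : ShiftInvariant S') : WeaklyInvariant S (π '' S') := by
  rintro _ ⟨φ, hφ, rfl⟩
  exact ⟨φ, hsub hφ, rfl, range_subset_image_eval hS' hφ⟩

theorem MaximalWrtPhaseSpace.antisymm {S S₁ S₂ : Set C(ℝ, X)} (h₁ : MaximalWrtPhaseSpace S S₁)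
    (h₂ : MaximalWrtPhaseSpace S S₂) (hsub₁ : S₁ ⊆ S) (hsub₂ : S₂ ⊆ S)
    (hS₁ : ShiftInvariant S₁) (hS₂ : ShiftInvariant S₂) (heq : π '' S₁ = π '' S₂) : S₁ = S₂ :=
  (h₂ S₁ hsub₁ hS₁ heq).antisymm (h₁ S₂ hsub₂ hS₂ heq.symm)

def trajectoriesIn (S : Set C(ℝ, X)) (A : Set X) : Set C(ℝ, X) :=
  {φ ∈ S | range φ ⊆ A}

section trajectoriesIn

variable {S : Set C(ℝ, X)} {A : Set X}

theorem trajectoriesIn_subset : trajectoriesIn S A ⊆ S := fun _ hφ => hφ.1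

theorem ShiftInvariant.trajectoriesIn (hS : ShiftInvariant S) :
    ShiftInvariant (trajectoriesIn S A) := by
  rintro t φ ⟨hφS, hφA⟩
  refine ⟨hS t φ hφS, ?_⟩
  rintro _ ⟨s, rfl⟩
  exact hφA ⟨s + t, rfl⟩

theorem image_eval_trajectoriesIn_subset : π '' trajectoriesIn S A ⊆ A := by
  rintro _ ⟨φ, ⟨-, hφA⟩, rfl⟩
  exact hφA ⟨0, rfl⟩

theorem image_eval_trajectoriesIn (hA : WeaklyInvariant S A) : π '' trajectoriesIn S A = A := by
  refine image_eval_trajectoriesIn_subset.antisymm fun x hx => ?_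
  obtain ⟨φ, hφS, hφ0, hφA⟩ := hA x hx
  exact ⟨φ, ⟨hφS, hφA⟩, hφ0⟩

theorem maximalWrtPhaseSpace_trajectoriesIn : MaximalWrtPhaseSpace S (trajectoriesIn S A) := by
  intro S'' hsub hS'' heq φ hφ
  refine ⟨hsub hφ, ?_⟩
  calc range φ ⊆ π '' S'' := range_subset_image_eval hS'' hφ
    _ = π '' trajectoriesIn S A := heq
    _ ⊆ A := image_eval_trajectoriesIn_subset

end trajectoriesIn

theorem bijOn_image_eval_general (S : Set C(ℝ, X)) (hS : ShiftInvariant S) :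
    Set.BijOn (fun S' : Set C(ℝ, X) => π '' S')
      {S' | S' ⊆ S ∧ ShiftInvariant S' ∧ MaximalWrtPhaseSpace S S'}
      {A : Set X | WeaklyInvariant S A} := by
  refine ⟨fun S' ⟨hsub, hS', _⟩ => weaklyInvariant_image_eval hsub hS', ?_, ?_⟩
  · rintro S₁ ⟨hsub₁, hS₁, h₁⟩ S₂ ⟨hsub₂, hS₂, h₂⟩ heq
    exact h₁.antisymm h₂ hsub₁ hsub₂ hS₁ hS₂ heq
  · intro A hA
    exact ⟨trajectoriesIn S A,
      ⟨trajectoriesIn_subset, hS.trajectoriesIn, maximalWrtPhaseSpace_trajectoriesIn⟩,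
      image_eval_trajectoriesIn hA⟩

theorem bijOn_image_eval [CompactSpace X] (S : Set C(ℝ, X)) (hS : ShiftInvariant S) :
    Set.BijOn (fun S' : Set C(ℝ, X) => π '' S')
      {S' | S' ⊆ S ∧ ShiftInvariant S' ∧ MaximalWrtPhaseSpace S S'}
      {A : Set X | WeaklyInvariant S A} :=
  bijOn_image_eval_general S hS

end AxODE
end

section
/- Let X be a metric space and S ⊆ C(ℝ,X) a set satisfying the compactness axiom and satisfying the existence axiom on A, i.e., for every x ∈ A there exists φ ∈ S with φ(0) = x. If A ⊆ X is compact, then the A-section S_A = {φ ∈ S : φ(0) ∈ A} is compact in C(ℝ,X). -/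
open Set Filter Topology

namespace AxODE

variable {X : Type*} [MetricSpace X]

theorem image_val_snd_evalMap_preimage_singleton_prod (S : Set C(ℝ, X)) (t : ℝ) (A : Set X) :
    (fun p : ℝ × S => (p.2 : C(ℝ, X))) '' (evalMap S ⁻¹' ({t} ×ˢ A)) = {φ ∈ S | φ t ∈ A} := by
  ext φ
  constructor
  · rintro ⟨⟨s, ψ⟩, ⟨rfl, hψ⟩, rfl⟩
    exact ⟨ψ.2, hψ⟩
  · rintro ⟨hφS, hφA⟩
    exact ⟨(t, ⟨φ, hφS⟩), ⟨rfl, hφA⟩, rfl⟩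

theorem CompactnessAxiom.isCompact_section_at {S : Set C(ℝ, X)} (hS : CompactnessAxiom S)
    (t : ℝ) {A : Set X} (hA : IsCompact A) : IsCompact {φ ∈ S | φ t ∈ A} := by
  rw [← image_val_snd_evalMap_preimage_singleton_prod]
  exact (hS _ (isCompact_singleton.prod hA)).image (continuous_subtype_val.comp continuous_snd)

theorem isCompact_section_general (S : Set C(ℝ, X)) (hcpt : CompactnessAxiom S)
    (A : Set X) (hA : IsCompact A) :
    IsCompact {φ ∈ S | φ 0 ∈ A} :=
  hcpt.isCompact_section_at 0 hA

theorem isCompact_section (S : Set C(ℝ, X)) (hcpt : CompactnessAxiom S)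
    (A : Set X) (hex : ∀ x ∈ A, ∃ φ ∈ S, φ 0 = x) (hA : IsCompact A) :
    IsCompact {φ ∈ S | φ 0 ∈ A} :=
  isCompact_section_general S hcpt A hA

end AxODE
end

section
/- Let X be a metric space and S ⊆ C(ℝ,X) a shift-invariant set satisfying the compactness axiom. A subset A ⊆ X is strongly invariant with respect to S if and only if the A-section S_A = {φ ∈ S : φ(0) ∈ A} is shift-invariant. -/
open Set Filter Topology

namespace AxODE

variable {X : Type*} [MetricSpace X]

/-- `A` is strongly invariant with respect to `S`. -/
def StronglyInvariant (S : Set C(ℝ, X)) (A : Set X) : Prop :=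
  ∀ φ ∈ S, φ 0 ∈ A → Set.range ⇑φ ⊆ A

theorem shift_apply_zero (t : ℝ) (φ : C(ℝ, X)) : shift t φ 0 = φ t := by
  simp [shift]

theorem stronglyInvariant_iff_section_shiftInvariant_general (S : Set C(ℝ, X))
    (hS : ShiftInvariant S) (A : Set X) :
    StronglyInvariant S A ↔ ShiftInvariant {φ ∈ S | φ 0 ∈ A} := by
  constructor
  · rintro hA t φ ⟨hφS, hφA⟩
    exact ⟨hS t φ hφS, shift_apply_zero t φ ▸ hA φ hφS hφA (mem_range_self t)⟩
  · rintro hsec φ hφS hφA _ ⟨t, rfl⟩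
    exact shift_apply_zero t φ ▸ (hsec t φ ⟨hφS, hφA⟩).2

theorem stronglyInvariant_iff_section_shiftInvariant (S : Set C(ℝ, X))
    (hS : ShiftInvariant S) (hcpt : CompactnessAxiom S) (A : Set X) :
    StronglyInvariant S A ↔ ShiftInvariant {φ ∈ S | φ 0 ∈ A} :=
  stronglyInvariant_iff_section_shiftInvariant_general S hS A

end AxODE
end

section
/- Let X be a metric space and S ⊆ C(ℝ,X) a shift-invariant set satisfying the compactness axiom. Then for every subset B ⊆ S: Λ⁺(B) = π(ω(B)) and Λ⁻(B) = π(α(B)), where Λ⁺(B) = {y ∈ X : there exist φ_n ∈ B and t_n → +∞ with φ_n(t_n) → y}, Λ⁻(B) = {y ∈ X : there exist φ_n ∈ B and t_n → −∞ with φ_n(t_n) → y}, ω(B) = ⋂_{t>0} closure(⋃_{s≥t} σ(s,B)), and α(B) = ⋂_{t<0} closure(⋃_{s≤t} σ(s,B)). -/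
/-!
`ω(B)` is the set of cluster points of the filter generated by the tails `⋃_{s ≥ t} σ(s, B)`,
and, the filter `atTop` being countably generated, `Λ⁺(B)` is the set of cluster points of its
image under `π`. All these filters live on `S`, and the compactness axiom makes `π` restricted
to `S` a proper map; a proper map sends the cluster points of a filter onto the cluster points
of its image filter. The same holds for `α(B)` and `Λ⁻(B)` with `atBot` in place of `atTop`.
-/

open Set Filter Topology

namespace AxODE

variable {X : Type*} [MetricSpace X]

/-- `ω(B) = ⋂_{t>0} closure (⋃_{s ≥ t} σ(s, B))`, taken in `C(ℝ, X)`. -/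
def omegaSet (B : Set C(ℝ, X)) : Set C(ℝ, X) :=
  ⋂ t ∈ Set.Ioi (0 : ℝ), closure (⋃ s ∈ Set.Ici t, shift s '' B)

/-- `α(B) = ⋂_{t<0} closure (⋃_{s ≤ t} σ(s, B))`, taken in `C(ℝ, X)`. -/
def alphaSet (B : Set C(ℝ, X)) : Set C(ℝ, X) :=
  ⋂ t ∈ Set.Iio (0 : ℝ), closure (⋃ s ∈ Set.Iic t, shift s '' B)

/-- `Λ⁺(B)`: points `y ∈ X` such that `φ_n(t_n) → y` for some `φ_n ∈ B`, `t_n → +∞`. -/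
def LambdaPlus (B : Set C(ℝ, X)) : Set X :=
  {y | ∃ (φn : ℕ → C(ℝ, X)) (tn : ℕ → ℝ), (∀ n, φn n ∈ B) ∧
    Tendsto tn atTop atTop ∧ Tendsto (fun n => φn n (tn n)) atTop (𝓝 y)}

/-- `Λ⁻(B)`: points `y ∈ X` such that `φ_n(t_n) → y` for some `φ_n ∈ B`, `t_n → −∞`. -/
def LambdaMinus (B : Set C(ℝ, X)) : Set X :=
  {y | ∃ (φn : ℕ → C(ℝ, X)) (tn : ℕ → ℝ), (∀ n, φn n ∈ B) ∧
    Tendsto tn atTop atBot ∧ Tendsto (fun n => φn n (tn n)) atTop (𝓝 y)}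

theorem _root_.image_setOf_clusterPt_of_isProperMap_restrict {α β : Type*} [TopologicalSpace α]
    [TopologicalSpace β] {f : α → β} {S : Set α} (hf : Continuous f)
    (hfS : IsProperMap fun x : S => f x) {F : Filter α} (hSF : S ∈ F) :
    f '' {x | ClusterPt x F} = {y | MapClusterPt y F f} := by
  have hF : map (↑) (comap ((↑) : S → α) F) = F := by
    rw [subtype_coe_map_comap, inf_of_le_left (le_principal_iff.2 hSF)]
  refine Subset.antisymm ?_ fun y hy => ?_
  · rintro _ ⟨x, hx, rfl⟩
    exact hx.map hf.continuousAt tendsto_map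
  · rw [mem_ofPred_eq, ← hF, ← mapClusterPt_comp] at hy
    obtain ⟨x, rfl, hx⟩ := hfS.clusterPt_of_mapClusterPt hy
    refine ⟨x, ?_, rfl⟩
    rw [mem_ofPred_eq, ← hF]
    exact hx.map continuous_subtype_val.continuousAt tendsto_map

def shiftFilter (l : Filter ℝ) (B : Set C(ℝ, X)) : Filter C(ℝ, X) :=
  map (fun q : ℝ × B => shift q.1 (q.2 : C(ℝ, X))) (l ×ˢ ⊤)

theorem hasBasis_shiftFilter {ι : Sort*} {l : Filter ℝ} {p : ι → Prop} {T : ι → Set ℝ}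
    (hl : l.HasBasis p T) (B : Set C(ℝ, X)) :
    (shiftFilter l B).HasBasis p fun i => ⋃ s ∈ T i, shift s '' B := by
  rw [shiftFilter]
  convert hl.prod_top.map (fun q : ℝ × B => shift q.1 (q.2 : C(ℝ, X))) using 2 with i
  ext ψ
  simp

theorem omegaSet_eq_setOf_clusterPt (B : Set C(ℝ, X)) :
    omegaSet B = {φ | ClusterPt φ (shiftFilter atTop B)} := by
  have hbasis : (atTop : Filter ℝ).HasBasis (0 < ·) Ici :=
    (atTop_basis' 0).to_hasBasis (fun t ht => ⟨t + 1, by linarith, Ici_subset_Ici.2 (by linarith)⟩)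
      fun t ht => ⟨t, ht.le, subset_rfl⟩
  ext φ
  simp [omegaSet, (hasBasis_shiftFilter hbasis B).clusterPt_iff_forall_mem_closure]

theorem alphaSet_eq_setOf_clusterPt (B : Set C(ℝ, X)) :
    alphaSet B = {φ | ClusterPt φ (shiftFilter atBot B)} := by
  have hbasis : (atBot : Filter ℝ).HasBasis (· < 0) Iic :=
    (atBot_basis' 0).to_hasBasis (fun t ht => ⟨t - 1, by linarith, Iic_subset_Iic.2 (by linarith)⟩)
      fun t ht => ⟨t, ht.le, subset_rfl⟩
  ext φ
  simp [alphaSet, (hasBasis_shiftFilter hbasis B).clusterPt_iff_forall_mem_closure]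

theorem mapClusterPt_shiftFilter_iff_exists_seq {l : Filter ℝ} [l.IsCountablyGenerated]
    {B : Set C(ℝ, X)} {y : X} :
    MapClusterPt y (shiftFilter l B) (fun φ => φ 0) ↔
      ∃ (φn : ℕ → C(ℝ, X)) (tn : ℕ → ℝ), (∀ n, φn n ∈ B) ∧ Tendsto tn atTop l ∧
        Tendsto (fun n => φn n (tn n)) atTop (𝓝 y) := by
  have hcomp : ((fun φ : C(ℝ, X) => φ 0) ∘ fun q : ℝ × B => shift q.1 (q.2 : C(ℝ, X))) =
      fun q => (q.2 : C(ℝ, X)) q.1 := by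
    ext q
    simp [shift]
  rw [shiftFilter, ← mapClusterPt_comp, hcomp]
  constructor
  · intro hy
    obtain ⟨θ, hθy, hθl⟩ := hy.exists_seq_tendsto
    exact ⟨fun n => (θ n).2, fun n => (θ n).1, fun n => (θ n).2.2,
      (tendsto_prod_iff'.1 hθl).1, hθy⟩
  · rintro ⟨φn, tn, hφn, htn, hy⟩
    have hθ : Tendsto (fun n => (tn n, (⟨φn n, hφn n⟩ : B))) atTop (l ×ˢ ⊤) :=
      htn.prodMk tendsto_top
    exact MapClusterPt.of_comp hθ hy.mapClusterPt

theorem lambdaPlus_eq_setOf_mapClusterPt (B : Set C(ℝ, X)) :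
    LambdaPlus B = {y | MapClusterPt y (shiftFilter atTop B) (fun φ => φ 0)} := by
  ext y
  exact mapClusterPt_shiftFilter_iff_exists_seq.symm

theorem lambdaMinus_eq_setOf_mapClusterPt (B : Set C(ℝ, X)) :
    LambdaMinus B = {y | MapClusterPt y (shiftFilter atBot B) (fun φ => φ 0)} := by
  ext y
  exact mapClusterPt_shiftFilter_iff_exists_seq.symm

theorem ShiftInvariant.mem_shiftFilter {S B : Set C(ℝ, X)} (hS : ShiftInvariant S) (hB : B ⊆ S)
    (l : Filter ℝ) : S ∈ shiftFilter l B :=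
  mem_map.2 (univ_mem' fun q => hS _ _ (hB q.2.2))

theorem CompactnessAxiom.isProperMap_eval_zero {S : Set C(ℝ, X)} (hS : CompactnessAxiom S) :
    IsProperMap fun φ : S => (φ : C(ℝ, X)) 0 := by
  refine isProperMap_iff_isCompact_preimage.2 ⟨by fun_prop, fun K hK => ?_⟩
  convert (hS _ (isCompact_singleton (x := (0 : ℝ)).prod hK)).image continuous_snd using 1
  ext φ
  simp [evalMap]

theorem lambda_eq_image_limitSet (S : Set C(ℝ, X)) (hS : ShiftInvariant S)
    (hcpt : CompactnessAxiom S) (B : Set C(ℝ, X)) (hB : B ⊆ S) :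
    LambdaPlus B = (fun φ : C(ℝ, X) => φ 0) '' omegaSet B ∧
    LambdaMinus B = (fun φ : C(ℝ, X) => φ 0) '' alphaSet B := by
  have key : ∀ l : Filter ℝ, (fun φ : C(ℝ, X) => φ 0) '' {φ | ClusterPt φ (shiftFilter l B)} =
      {y | MapClusterPt y (shiftFilter l B) (fun φ => φ 0)} := fun l =>
    image_setOf_clusterPt_of_isProperMap_restrict (continuous_eval_const 0)
      hcpt.isProperMap_eval_zero (hS.mem_shiftFilter hB l)
  rw [lambdaPlus_eq_setOf_mapClusterPt, lambdaMinus_eq_setOf_mapClusterPt,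
    omegaSet_eq_setOf_clusterPt, alphaSet_eq_setOf_clusterPt, key, key]
  exact ⟨rfl, rfl⟩

end AxODE
end

section
/- Let X be a metric space and S ⊆ C(ℝ,X) a shift-invariant set satisfying the compactness axiom. If a compact subset K ⊆ X is weakly invariant with respect to S, then ω_S(x) ≠ ∅ for every x ∈ K. -/
open Set Filter Topology

namespace AxODE

variable {X : Type*} [MetricSpace X]

/-- `ω_S(x) = π(ω(S_x))` where `S_x = {φ ∈ S : φ(0) = x}`. -/
def omegaS (S : Set C(ℝ, X)) (x : X) : Set X :=
  (fun φ : C(ℝ, X) => φ 0) '' omegaSet {φ ∈ S | φ 0 = x}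

/-!
A solution through `x` whose range lies in `K` has its whole forward orbit inside
`{ψ ∈ S | ψ 0 ∈ K}`, which is compact by the compactness axiom. Its ω-limit set, i.e. the
ω-limit of the shift flow in Mathlib's sense, is therefore nonempty, and it lies in `ω(S_x)`.
-/

@[simp]
theorem shift_apply (t s : ℝ) (φ : C(ℝ, X)) : shift t φ s = φ (s + t) := rfl

theorem omegaSet_eq_omegaLimit (B : Set C(ℝ, X)) : omegaSet B = omegaLimit atTop shift B := by
  refine Subset.antisymm (subset_iInter₂ fun u hu => ?_) (subset_iInter₂ fun t _ => ?_)
  · obtain ⟨t, ht⟩ := mem_atTop_sets.1 hu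
    have hpos : max t 1 ∈ Ioi (0 : ℝ) := mem_Ioi.2 (lt_max_of_lt_right one_pos)
    refine (biInter_subset_of_mem hpos).trans (closure_mono ?_)
    rw [iUnion_image_left]
    exact image2_subset (fun s hs => ht s ((le_max_left t 1).trans hs)) Subset.rfl
  · rw [iUnion_image_left]
    exact omegaLimit_subset_closure_image2 _ _ _ (Ici_mem_atTop t)

theorem omegaSet_mono {B B' : Set C(ℝ, X)} (h : B ⊆ B') : omegaSet B ⊆ omegaSet B' := by
  simpa only [omegaSet_eq_omegaLimit] using omegaLimit_mono_right _ _ h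

theorem omegaSet_nonempty_of_mapsTo {B D : Set C(ℝ, X)} (hD : IsCompact D) (hB : B.Nonempty)
    (hBD : ∀ t, MapsTo (shift t) B D) : (omegaSet B).Nonempty := by
  rw [omegaSet_eq_omegaLimit]
  refine nonempty_omegaLimit_of_isCompact_absorbing _ _ _ hD ⟨univ, univ_mem, ?_⟩ hB
  exact closure_minimal (image2_subset_iff.2 fun t _ => hBD t) hD.isClosed

theorem CompactnessAxiom.isCompact_setOf_apply_zero_mem {S : Set C(ℝ, X)}
    (hS : CompactnessAxiom S) {K : Set X} (hK : IsCompact K) :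
    IsCompact {φ ∈ S | φ 0 ∈ K} := by
  have himage : {φ ∈ S | φ 0 ∈ K} =
      (fun p : ℝ × S => (p.2 : C(ℝ, X))) '' (evalMap S ⁻¹' ({0} ×ˢ K)) := by
    ext φ
    constructor
    · rintro ⟨hφS, hφK⟩
      exact ⟨(0, ⟨φ, hφS⟩), ⟨rfl, hφK⟩, rfl⟩
    · rintro ⟨⟨t, ψ, hψS⟩, ⟨rfl, hψK⟩, rfl⟩
      exact ⟨hψS, hψK⟩
  rw [himage]
  exact (hS _ (isCompact_singleton.prod hK)).image (continuous_subtype_val.comp continuous_snd)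

theorem omegaS_nonempty_of_weaklyInvariant_compact (S : Set C(ℝ, X))
    (hS : ShiftInvariant S) (hcpt : CompactnessAxiom S) (K : Set X)
    (hK : IsCompact K) (hKinv : WeaklyInvariant S K) :
    ∀ x ∈ K, (omegaS S x).Nonempty := by
  intro x hx
  obtain ⟨φ, hφS, hφ0, hφK⟩ := hKinv x hx
  have horbit : ∀ t, MapsTo (shift t) {φ} {ψ ∈ S | ψ 0 ∈ K} := fun t =>
    mapsTo_singleton.2 ⟨hS t φ hφS, by simpa using hφK (mem_range_self t)⟩
  obtain ⟨ψ, hψ⟩ := omegaSet_nonempty_of_mapsTo (hcpt.isCompact_setOf_apply_zero_mem hK)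
    (singleton_nonempty φ) horbit
  have hφx : {φ} ⊆ {ψ ∈ S | ψ 0 = x} := singleton_subset_iff.2 ⟨hφS, hφ0⟩
  exact ⟨ψ 0, mem_image_of_mem _ (omegaSet_mono hφx hψ)⟩

end AxODE
end

section
/- Let X be a compact metric space, S ⊆ C(ℝ,X) a shift-invariant Borel set, and μ an invariant measure of S, witnessed by a shift-invariant Borel probability measure ν on C(ℝ,X) with ν(S) = 1 and μ = π_*ν. For t ∈ ℝ and A ⊆ X define V(t)⁻¹A := {x ∈ X : there exists φ ∈ S with φ(0) = x and φ(t) ∈ A}. Then for every Borel set A ⊆ X and every t ∈ ℝ: μ(A) ≤ μ*(V(t)⁻¹A), where μ* denotes the outer measure induced by μ. -/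
/-!
Since `ν` is shift-invariant, the law of `φ ↦ φ t` under `ν` is `μ`, so `μ A` is the `ν`-mass of
the paths that are in `A` at time `t`. As `S` has full measure, almost all of these paths lie in
`S`, and their values at time `0` lie in `V(t)⁻¹A`.
-/

open Set Filter Topology MeasureTheory

namespace AxODE

variable {X : Type*} [MetricSpace X]

/-- `V(t)⁻¹A = {x ∈ X : ∃ φ ∈ S, φ(0) = x, φ(t) ∈ A}`. -/
def Vinv (S : Set C(ℝ, X)) (t : ℝ) (A : Set X) : Set X :=
  {x | ∃ φ ∈ S, φ 0 = x ∧ φ t ∈ A}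

theorem continuous_shift (t : ℝ) : Continuous (shift (X := X) t) :=
  ContinuousMap.continuous_precomp ⟨(· + t), continuous_add_const t⟩

theorem eval_zero_comp_shift (t : ℝ) :
    (fun φ : C(ℝ, X) => φ 0) ∘ shift t = fun φ => φ t := by
  ext φ
  simp [shift]

theorem Vinv_eq_image (S : Set C(ℝ, X)) (t : ℝ) (A : Set X) :
    Vinv S t A = (fun φ : C(ℝ, X) => φ 0) '' ((fun φ : C(ℝ, X) => φ t) ⁻¹' A ∩ S) := by
  ext x
  simp only [Vinv, mem_ofPred_eq, mem_image, mem_inter_iff, mem_preimage]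
  tauto

theorem map_eval_eq_map_eval_zero [MeasurableSpace X] [BorelSpace X]
    [MeasurableSpace C(ℝ, X)] [BorelSpace C(ℝ, X)] {ν : Measure C(ℝ, X)} {t : ℝ}
    (hν : ν.map (shift t) = ν) :
    ν.map (fun φ => φ t) = ν.map (fun φ => φ 0) := by
  conv_rhs => rw [← hν]
  rw [Measure.map_map (continuous_eval_const 0).measurable (continuous_shift t).measurable,
    eval_zero_comp_shift]

/-- A measure in Mathlib, applied to an arbitrary (possibly non-measurable) set, gives the
induced outer measure of that set. -/
theorem invariant_measure_le_Vinv_general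
    [MeasurableSpace X] [BorelSpace X]
    [MeasurableSpace C(ℝ, X)] [BorelSpace C(ℝ, X)]
    (S : Set C(ℝ, X)) (hSmeas : MeasurableSet S)
    (μ : Measure X) (ν : Measure C(ℝ, X)) (hν : IsProbabilityMeasure ν)
    (hνS : ν S = 1) (hνinv : ∀ t : ℝ, Measure.map (shift t) ν = ν)
    (hμ : μ = Measure.map (fun φ : C(ℝ, X) => φ 0) ν) :
    ∀ A : Set X, MeasurableSet A → ∀ t : ℝ, μ A ≤ μ (Vinv S t A) := by
  intro A hA t
  have hSc : ν Sᶜ = 0 := (prob_compl_eq_zero_iff hSmeas).2 hνS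
  calc μ A = ν.map (fun φ => φ t) A := by rw [hμ, map_eval_eq_map_eval_zero (hνinv t)]
    _ = ν ((fun φ : C(ℝ, X) => φ t) ⁻¹' A) :=
      Measure.map_apply (continuous_eval_const t).measurable hA
    _ = ν ((fun φ : C(ℝ, X) => φ t) ⁻¹' A ∩ S) := (measure_inter_conull hSc).symm
    _ ≤ μ (Vinv S t A) := by
      rw [Vinv_eq_image, hμ]
      exact Measure.le_map_apply_image (continuous_eval_const 0).measurable.aemeasurable _

/-- Note: a measure in Mathlib, applied to an arbitrary (possibly
non-measurable) set, gives the induced outer measure of that set. -/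
theorem invariant_measure_le_Vinv [CompactSpace X]
    [MeasurableSpace X] [BorelSpace X]
    [MeasurableSpace C(ℝ, X)] [BorelSpace C(ℝ, X)]
    (S : Set C(ℝ, X)) (hS : ShiftInvariant S) (hSmeas : MeasurableSet S)
    (μ : Measure X) (ν : Measure C(ℝ, X)) (hν : IsProbabilityMeasure ν)
    (hνS : ν S = 1) (hνinv : ∀ t : ℝ, Measure.map (shift t) ν = ν)
    (hμ : μ = Measure.map (fun φ : C(ℝ, X) => φ 0) ν) :
    ∀ A : Set X, MeasurableSet A → ∀ t : ℝ, μ A ≤ μ (Vinv S t A) :=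
  invariant_measure_le_Vinv_general S hSmeas μ ν hν hνS hνinv hμ

end AxODE
end

section
/- Let X be a compact metric space, let S ⊆ C(ℝ,X) be a nonempty shift-invariant set satisfying the compactness axiom, and let μ be an invariant measure of S. Then the closure of the set of recurrent points of S, i.e., the set closure({x ∈ X : x ∈ ω_S(x)}), has full measure: μ(closure({x ∈ X : x ∈ ω_S(x)})) = 1. -/
/-!
The shift by time `1` preserves the invariant measure `ν` on the path space, which is finite,
so it is conservative. As `X` is compact metric, `C(ℝ, X)` is second countable, and Poincaré
recurrence says that `ν`-almost every path returns to each of its neighbourhoods at arbitrarily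
large integer times. Such a path `φ ∈ S` lies in `ω(S_{φ 0})`, so `φ 0` is recurrent. Hence
`ν`-almost every path in `S` starts at a recurrent point, and pushing forward along `π` gives
the claim.
-/

open Set Filter Topology MeasureTheory

namespace AxODE

variable {X : Type*} [MetricSpace X]

theorem shift_shift (t u : ℝ) (φ : C(ℝ, X)) : shift t (shift u φ) = shift (u + t) φ := by
  ext s
  simp only [shift, ContinuousMap.coe_mk, add_assoc, add_comm t u]

theorem shift_iterate (t : ℝ) (n : ℕ) (φ : C(ℝ, X)) : (shift t)^[n] φ = shift (n * t) φ := by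
  induction n with
  | zero => ext s; simp [shift]
  | succ n ih => rw [Function.iterate_succ_apply', ih, shift_shift]; push_cast; ring_nf

theorem mem_omegaSet_of_frequently_shift_mem {B : Set C(ℝ, X)} {φ : C(ℝ, X)} (hφ : φ ∈ B)
    (hrec : ∀ U ∈ 𝓝 φ, ∃ᶠ n : ℕ in atTop, shift (n : ℝ) φ ∈ U) : φ ∈ omegaSet B := by
  simp only [omegaSet, mem_iInter]
  intro t _
  rw [mem_closure_iff_nhds]
  intro U hU
  obtain ⟨n, hnU, hnt⟩ := ((hrec U hU).and_eventually (eventually_ge_atTop ⌈t⌉₊)).exists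
  have htn : t ≤ n := (Nat.le_ceil t).trans (by exact_mod_cast hnt)
  exact ⟨_, hnU, mem_biUnion htn (mem_image_of_mem _ hφ)⟩

theorem mem_omegaS_self {S : Set C(ℝ, X)} {φ : C(ℝ, X)} (hφ : φ ∈ S)
    (hrec : ∀ U ∈ 𝓝 φ, ∃ᶠ n : ℕ in atTop, shift (n : ℝ) φ ∈ U) : φ 0 ∈ omegaS S (φ 0) :=
  ⟨φ, mem_omegaSet_of_frequently_shift_mem ⟨hφ, rfl⟩ hrec, rfl⟩

theorem ae_frequently_shift_mem_nhds [SecondCountableTopology X] [MeasurableSpace C(ℝ, X)]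
    [BorelSpace C(ℝ, X)] (ν : Measure C(ℝ, X)) [IsFiniteMeasure ν]
    (hν : Measure.map (shift 1) ν = ν) :
    ∀ᵐ φ ∂ν, ∀ U ∈ 𝓝 φ, ∃ᶠ n : ℕ in atTop, shift (n : ℝ) φ ∈ U := by
  have hcons : Conservative (shift (1 : ℝ)) ν :=
    (MeasurePreserving.mk (continuous_shift 1).measurable hν).conservative
  filter_upwards [hcons.ae_frequently_mem_of_mem_nhds] with φ hφ U hU
  simpa only [shift_iterate, mul_one] using hφ U hU

theorem closure_recurrent_full_measure_general [CompactSpace X]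
    [MeasurableSpace X] [BorelSpace X]
    [MeasurableSpace C(ℝ, X)] [BorelSpace C(ℝ, X)]
    (S : Set C(ℝ, X))
    (μ : Measure X)
    (hμ : ∃ ν : Measure C(ℝ, X), IsProbabilityMeasure ν ∧ ν S = 1 ∧
      (∀ t : ℝ, Measure.map (shift t) ν = ν) ∧
      μ = Measure.map (fun φ : C(ℝ, X) => φ 0) ν) :
    μ (closure {x : X | x ∈ omegaS S x}) = 1 := by
  obtain ⟨ν, hprob, hνS, hinv, rfl⟩ := hμ
  have hrecurrent : ∀ᵐ φ ∂ν, φ ∈ S → φ 0 ∈ closure {x : X | x ∈ omegaS S x} :=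
    (ae_frequently_shift_mem_nhds ν (hinv 1)).mono fun φ hrec hφS =>
      subset_closure (mem_ofPred.2 (mem_omegaS_self hφS hrec))
  rw [Measure.map_apply (continuous_eval_const 0).measurable isClosed_closure.measurableSet]
  exact le_antisymm prob_le_one (hνS ▸ measure_mono_ae hrecurrent)

theorem closure_recurrent_full_measure [CompactSpace X]
    [MeasurableSpace X] [BorelSpace X]
    [MeasurableSpace C(ℝ, X)] [BorelSpace C(ℝ, X)]
    (S : Set C(ℝ, X)) (hne : S.Nonempty) (hS : ShiftInvariant S)
    (hcpt : CompactnessAxiom S)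
    (μ : Measure X)
    (hμ : ∃ ν : Measure C(ℝ, X), IsProbabilityMeasure ν ∧ ν S = 1 ∧
      (∀ t : ℝ, Measure.map (shift t) ν = ν) ∧
      μ = Measure.map (fun φ : C(ℝ, X) => φ 0) ν) :
    μ (closure {x : X | x ∈ omegaS S x}) = 1 :=
  closure_recurrent_full_measure_general S μ hμ

end AxODE
end
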